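/- Let k ≥ 1, α ∈ (−(k+1)/2, −k/2), and let g : (0,∞)^k → ℝ be measurable with g(c x) = c^α g(x) for all c > 0, and A := ∫_{(0,∞)^k} |g(y) g(1+y)| dy < ∞. Then for every λ > 0 and t ≥ 0, ∫_{ℝ^k} h_t^λ(x)² dx ≤ A · t^{2α+k+2} / ((α + (k+1)/2)(2α + k + 2)). -/

import Mathlib

/-!
For `λ ≥ 0` the exponential factor is at most `1`, so `|h_t^λ(x)| ≤ ∫_0^t 1_{x < s} |g(s·1 - x)| ds`.
Squaring and using Tonelli, `∫ h_t^λ(x)² dx` is at most the integral over `(s, s') ∈ (0, t]²` of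
`∫ 1_{x < s} |g(s·1 - x) g(s'·1 - x)| dx`. For `s < s'` the substitution `x = s·1 - (s' - s) y`
and the homogeneity of `g` turn this inner integral into `(s' - s)^(2α + k) A`, and
`∫∫_{(0, t]²} |s' - s|^p ds ds' = 2 t^(p + 2) / ((p + 1)(p + 2))` for `p = 2α + k > -1`.
-/

open MeasureTheory Real Set

/-- The kernel `h_t^λ` of the tempered generalized Hermite process. -/
noncomputable def tghKernel {k : ℕ} (g : (Fin k → ℝ) → ℝ) (lam t : ℝ)
    (x : Fin k → ℝ) : ℝ :=
  ∫ s in Set.Ioc (0 : ℝ) t,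
    Set.indicator {s' : ℝ | ∀ i, x i < s'}
      (fun s' => g (fun i => s' - x i) * Real.exp (-lam * ∑ i, (s' - x i))) s

open scoped ENNReal

theorem lintegral_Ioc_sub_rpow {p a b : ℝ} (hp : -1 < p) (hab : a ≤ b) :
    ∫⁻ u in Ioc a b, ENNReal.ofReal ((u - a) ^ p) =
      ENNReal.ofReal ((b - a) ^ (p + 1) / (p + 1)) := by
  have hint : IntervalIntegrable (fun u => (u - a) ^ p) volume a b := by
    simpa using
      (intervalIntegral.intervalIntegrable_rpow' hp (a := 0) (b := b - a)).comp_sub_right a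
  rw [← ofReal_integral_eq_lintegral_ofReal
      ((intervalIntegrable_iff_integrableOn_Ioc_of_le hab).mp hint)
      (ae_restrict_of_forall_mem measurableSet_Ioc fun u hu =>
        rpow_nonneg (sub_nonneg.mpr hu.1.le) _),
    ← intervalIntegral.integral_of_le hab, intervalIntegral.integral_comp_sub_right (· ^ p),
    sub_self, integral_rpow (Or.inl hp), zero_rpow (by linarith), sub_zero]

theorem lintegral_Ioc_rpow_sub {p a b : ℝ} (hp : -1 < p) (hab : a ≤ b) :
    ∫⁻ u in Ioc a b, ENNReal.ofReal ((b - u) ^ p) =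
      ENNReal.ofReal ((b - a) ^ (p + 1) / (p + 1)) := by
  have hint : IntervalIntegrable (fun u => (b - u) ^ p) volume a b := by
    simpa using
      (intervalIntegral.intervalIntegrable_rpow' hp (a := b - a) (b := 0)).comp_sub_left b
  rw [← ofReal_integral_eq_lintegral_ofReal
      ((intervalIntegrable_iff_integrableOn_Ioc_of_le hab).mp hint)
      (ae_restrict_of_forall_mem measurableSet_Ioc fun u hu =>
        rpow_nonneg (sub_nonneg.mpr hu.2) _),
    ← intervalIntegral.integral_of_le hab, intervalIntegral.integral_comp_sub_left (· ^ p),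
    sub_self, integral_rpow (Or.inl hp), zero_rpow (by linarith), sub_zero]

theorem lintegral_Ioc_abs_sub_rpow {p s t : ℝ} (hp : -1 < p) (h0s : 0 ≤ s) (hst : s ≤ t) :
    ∫⁻ u in Ioc 0 t, ENNReal.ofReal (|u - s| ^ p) =
      ENNReal.ofReal ((s ^ (p + 1) + (t - s) ^ (p + 1)) / (p + 1)) := by
  have hleft : ∫⁻ u in Ioc 0 s, ENNReal.ofReal (|u - s| ^ p) =
      ENNReal.ofReal (s ^ (p + 1) / (p + 1)) := by
    rw [setLIntegral_congr_fun measurableSet_Ioc fun u hu => by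
      rw [abs_sub_comm, abs_of_nonneg (sub_nonneg.mpr hu.2)],
      lintegral_Ioc_rpow_sub hp h0s, sub_zero]
  have hright : ∫⁻ u in Ioc s t, ENNReal.ofReal (|u - s| ^ p) =
      ENNReal.ofReal ((t - s) ^ (p + 1) / (p + 1)) := by
    rw [setLIntegral_congr_fun measurableSet_Ioc fun u hu => by
      rw [abs_of_nonneg (sub_nonneg.mpr hu.1.le)], lintegral_Ioc_sub_rpow hp hst]
  have hq : 0 < p + 1 := by linarith
  rw [← Ioc_union_Ioc_eq_Ioc h0s hst,
    lintegral_union measurableSet_Ioc (Ioc_disjoint_Ioc_of_le le_rfl), hleft, hright,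
    ← ENNReal.ofReal_add (by positivity) (div_nonneg (rpow_nonneg (sub_nonneg.mpr hst) _) hq.le),
    add_div]

theorem lintegral_Ioc_lintegral_Ioc_abs_sub_rpow {p t : ℝ} (hp : -1 < p) (ht : 0 ≤ t) :
    ∫⁻ s in Ioc 0 t, ∫⁻ s' in Ioc 0 t, ENNReal.ofReal (|s' - s| ^ p) =
      ENNReal.ofReal (2 * t ^ (p + 2) / ((p + 1) * (p + 2))) := by
  have hq : 0 < p + 1 := by linarith
  have hinner : ∀ s ∈ Ioc 0 t, ∫⁻ s' in Ioc 0 t, ENNReal.ofReal (|s' - s| ^ p) =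
      (ENNReal.ofReal ((s - 0) ^ (p + 1)) + ENNReal.ofReal ((t - s) ^ (p + 1))) *
        ENNReal.ofReal (p + 1)⁻¹ := fun s ⟨h0s, hst⟩ => by
    have hs : 0 ≤ s ^ (p + 1) := rpow_nonneg h0s.le _
    have hts : 0 ≤ (t - s) ^ (p + 1) := rpow_nonneg (sub_nonneg.mpr hst) _
    rw [lintegral_Ioc_abs_sub_rpow hp h0s.le hst, sub_zero, div_eq_mul_inv,
      ENNReal.ofReal_mul (add_nonneg hs hts), ENNReal.ofReal_add hs hts]
  rw [setLIntegral_congr_fun measurableSet_Ioc hinner,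
    lintegral_mul_const' _ _ ENNReal.ofReal_ne_top, lintegral_add_left (by fun_prop),
    lintegral_Ioc_sub_rpow (by linarith) ht, lintegral_Ioc_rpow_sub (by linarith) ht,
    ← ENNReal.ofReal_add (by positivity) (by positivity), ← ENNReal.ofReal_mul (by positivity)]
  congr 1
  rw [sub_zero, show p + 1 + 1 = p + 2 by ring]
  field_simp
  ring

theorem lintegral_sq_lintegral_eq {α β : Type*} [MeasurableSpace α] [MeasurableSpace β]
    {μ : Measure α} {ν : Measure β} [SFinite μ] [SFinite ν] {F : α → β → ℝ≥0∞}
    (hF : Measurable (Function.uncurry F)) :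
    ∫⁻ x, (∫⁻ s, F s x ∂μ) ^ 2 ∂ν = ∫⁻ s, ∫⁻ s', ∫⁻ x, F s x * F s' x ∂ν ∂μ ∂μ := by
  have hsq (x : β) : (∫⁻ s, F s x ∂μ) ^ 2 = ∫⁻ s, ∫⁻ s', F s x * F s' x ∂μ ∂μ := by
    have hFx : Measurable (F · x) := hF.comp (measurable_id.prodMk measurable_const)
    rw [sq, ← lintegral_mul_const _ hFx]
    exact lintegral_congr fun s => (lintegral_const_mul _ hFx).symm
  have hF₃ : Measurable fun q : (β × α) × α => F q.1.2 q.1.1 * F q.2 q.1.1 :=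
    (hF.comp ((measurable_snd.comp measurable_fst).prodMk (measurable_fst.comp measurable_fst))).mul
      (hF.comp (measurable_snd.prodMk (measurable_fst.comp measurable_fst)))
  rw [lintegral_congr hsq, lintegral_lintegral_swap hF₃.lintegral_prod_right'.aemeasurable]
  refine lintegral_congr fun s => lintegral_lintegral_swap ?_
  exact (hF₃.comp (measurable_fst.prodMk measurable_const |>.prodMk measurable_snd)).aemeasurable

theorem lintegral_comp_inv_smul_of_pos {E : Type*} [NormedAddCommGroup E] [NormedSpace ℝ E]
    [MeasurableSpace E] [BorelSpace E] [FiniteDimensional ℝ E] (μ : Measure E)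
    [μ.IsAddHaarMeasure] (f : E → ℝ≥0∞) {R : ℝ} (hR : 0 < R) :
    ∫⁻ x, f (R⁻¹ • x) ∂μ = ENNReal.ofReal (R ^ Module.finrank ℝ E) * ∫⁻ x, f x ∂μ := by
  let e : E ≃ᵐ E := (Homeomorph.smul (Units.mk0 R⁻¹ (inv_ne_zero hR.ne'))).toMeasurableEquiv
  calc ∫⁻ x, f (R⁻¹ • x) ∂μ = ∫⁻ x, f x ∂(μ.map (R⁻¹ • ·)) := (lintegral_map_equiv f e).symm
    _ = _ := by
      rw [Measure.map_addHaar_smul μ (inv_ne_zero hR.ne'), lintegral_smul_measure, inv_pow,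
        inv_inv, abs_of_pos (by positivity), smul_eq_mul]

section Majorant

variable {ι : Type*} [Fintype ι]

noncomputable def kernelMajorant (g : (ι → ℝ) → ℝ) (s : ℝ) (x : ι → ℝ) : ℝ≥0∞ :=
  {x : ι → ℝ | ∀ i, x i < s}.indicator (fun x => ‖g (fun i => s - x i)‖ₑ) x

theorem measurableSet_forall_pos : MeasurableSet {y : ι → ℝ | ∀ i, 0 < y i} := by
  measurability

theorem measurable_kernelMajorant {g : (ι → ℝ) → ℝ} (hg : Measurable g) :
    Measurable (Function.uncurry (kernelMajorant g)) := by
  change Measurable ({p : ℝ × (ι → ℝ) | ∀ i, p.2 i < p.1}.indicator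
    fun p => ‖g (fun i => p.1 - p.2 i)‖ₑ)
  refine Measurable.indicator ?_ (by measurability)
  exact (hg.comp (measurable_pi_lambda _ fun i =>
      measurable_fst.sub ((measurable_pi_apply i).comp measurable_snd))).enorm

theorem lintegral_mul_kernelMajorant_of_lt (g : (ι → ℝ) → ℝ) {s s' : ℝ} (h : s < s') :
    ∫⁻ x, kernelMajorant g s x * kernelMajorant g s' x =
      ∫⁻ z in {z : ι → ℝ | ∀ i, 0 < z i}, ‖g z * g (fun i => (s' - s) + z i)‖ₑ := by
  set F : (ι → ℝ) → ℝ≥0∞ := fun z => ‖g z * g (fun i => (s' - s) + z i)‖ₑ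
  have hpt (x : ι → ℝ) : kernelMajorant g s x * kernelMajorant g s' x =
      {z : ι → ℝ | ∀ i, 0 < z i}.indicator F ((fun _ => s) - x) := by
    by_cases hx : ∀ i, x i < s
    · have hx' : ∀ i, x i < s' := fun i => (hx i).trans h
      have hpos : ∀ i, 0 < s - x i := fun i => sub_pos.mpr (hx i)
      simp [kernelMajorant, F, hx, hx', hpos, enorm_mul, Pi.sub_def]
    · simp [kernelMajorant, hx, Pi.sub_def]
  rw [lintegral_congr hpt, lintegral_sub_left_eq_self,
    lintegral_indicator measurableSet_forall_pos]

theorem setLIntegral_enorm_mul_shift_eq {α : ℝ} {g : (ι → ℝ) → ℝ}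
    (hhom : ∀ c : ℝ, 0 < c → ∀ x : ι → ℝ, (∀ i, 0 < x i) → g (c • x) = c ^ α * g x)
    {δ : ℝ} (hδ : 0 < δ) :
    ∫⁻ z in {z : ι → ℝ | ∀ i, 0 < z i}, ‖g z * g (fun i => δ + z i)‖ₑ =
      ENNReal.ofReal (δ ^ (2 * α + Fintype.card ι)) *
        ∫⁻ y in {y : ι → ℝ | ∀ i, 0 < y i}, ‖g y * g (fun i => 1 + y i)‖ₑ := by
  set Q := {y : ι → ℝ | ∀ i, 0 < y i}
  have hpt (z : ι → ℝ) : Q.indicator (fun z => ‖g z * g (fun i => δ + z i)‖ₑ) z =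
      ENNReal.ofReal (δ ^ (2 * α)) *
        Q.indicator (fun y => ‖g y * g (fun i => 1 + y i)‖ₑ) (δ⁻¹ • z) := by
    obtain ⟨y, rfl⟩ : ∃ y, z = δ • y := ⟨δ⁻¹ • z, (smul_inv_smul₀ hδ.ne' z).symm⟩
    rw [inv_smul_smul₀ hδ.ne']
    by_cases hy : y ∈ Q
    · have hδy : δ • y ∈ Q := fun i => mul_pos hδ (hy i)
      have hshift : (fun i => δ + (δ • y) i) = δ • fun i => 1 + y i := by
        ext i; simp [mul_add]
      rw [indicator_of_mem hδy, indicator_of_mem hy, hshift, hhom δ hδ y hy,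
        hhom δ hδ _ fun i => by linarith [hy i], mul_mul_mul_comm, ← rpow_add hδ, ← two_mul,
        enorm_mul _ (g y * _), Real.enorm_of_nonneg (by positivity)]
    · have hδy : δ • y ∉ Q := fun h => hy fun i => pos_of_mul_pos_right (h i) hδ.le
      rw [indicator_of_notMem hδy, indicator_of_notMem hy, mul_zero]
  rw [← lintegral_indicator measurableSet_forall_pos,
    ← lintegral_indicator measurableSet_forall_pos, lintegral_congr hpt,
    lintegral_const_mul' _ _ ENNReal.ofReal_ne_top, lintegral_comp_inv_smul_of_pos volume _ hδ,
    ← mul_assoc, ← ENNReal.ofReal_mul (by positivity), Module.finrank_fintype_fun_eq_card,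
    ← rpow_natCast, ← rpow_add hδ]

theorem lintegral_mul_kernelMajorant_of_ne {α : ℝ} {g : (ι → ℝ) → ℝ}
    (hhom : ∀ c : ℝ, 0 < c → ∀ x : ι → ℝ, (∀ i, 0 < x i) → g (c • x) = c ^ α * g x)
    {s s' : ℝ} (h : s ≠ s') :
    ∫⁻ x, kernelMajorant g s x * kernelMajorant g s' x =
      ENNReal.ofReal (|s' - s| ^ (2 * α + Fintype.card ι)) *
        ∫⁻ y in {y : ι → ℝ | ∀ i, 0 < y i}, ‖g y * g (fun i => 1 + y i)‖ₑ := by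
  rcases h.lt_or_gt with h | h
  · rw [lintegral_mul_kernelMajorant_of_lt g h,
      setLIntegral_enorm_mul_shift_eq hhom (sub_pos.mpr h), abs_of_pos (sub_pos.mpr h)]
  · simp_rw [mul_comm (kernelMajorant g s _)]
    rw [lintegral_mul_kernelMajorant_of_lt g h,
      setLIntegral_enorm_mul_shift_eq hhom (sub_pos.mpr h), abs_sub_comm,
      abs_of_pos (sub_pos.mpr h)]

theorem lintegral_lintegral_lintegral_mul_kernelMajorant {α : ℝ} {g : (ι → ℝ) → ℝ}
    (hhom : ∀ c : ℝ, 0 < c → ∀ x : ι → ℝ, (∀ i, 0 < x i) → g (c • x) = c ^ α * g x) (t : ℝ) :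
    ∫⁻ s in Ioc 0 t, ∫⁻ s' in Ioc 0 t, ∫⁻ x, kernelMajorant g s x * kernelMajorant g s' x =
      (∫⁻ s in Ioc 0 t, ∫⁻ s' in Ioc 0 t,
          ENNReal.ofReal (|s' - s| ^ (2 * α + Fintype.card ι))) *
        ∫⁻ y in {y : ι → ℝ | ∀ i, 0 < y i}, ‖g y * g (fun i => 1 + y i)‖ₑ := by
  have hmeas : Measurable fun q : ℝ × ℝ =>
      ENNReal.ofReal (|q.2 - q.1| ^ (2 * α + Fintype.card ι)) := by
    fun_prop
  rw [← lintegral_mul_const _ hmeas.lintegral_prod_right']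
  refine lintegral_congr fun s => ?_
  rw [← lintegral_mul_const _ (by fun_prop)]
  -- the diagonal `s' = s`, where the pairing lemma does not apply, is a null set
  refine lintegral_congr_ae ?_
  filter_upwards [ae_restrict_of_ae (measure_eq_zero_iff_ae_notMem.mp (measure_singleton s))]
    with s' hs'
  exact lintegral_mul_kernelMajorant_of_ne hhom (Ne.symm hs')

end Majorant

theorem enorm_tghKernel_le {k : ℕ} (g : (Fin k → ℝ) → ℝ) {lam : ℝ} (hlam : 0 ≤ lam) (t : ℝ)
    (x : Fin k → ℝ) :
    ‖tghKernel g lam t x‖ₑ ≤ ∫⁻ s in Ioc 0 t, kernelMajorant g s x := by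
  refine (enorm_integral_le_lintegral_enorm _).trans (lintegral_mono fun s => ?_)
  by_cases hs : ∀ i, x i < s
  · have hexp : Real.exp (-lam * ∑ i, (s - x i)) ≤ 1 :=
      Real.exp_le_one_iff.mpr <| mul_nonpos_of_nonpos_of_nonneg (neg_nonpos.mpr hlam)
        (Finset.sum_nonneg fun i _ => (sub_pos.mpr (hs i)).le)
    simp only [kernelMajorant, indicator_of_mem (show s ∈ {s' : ℝ | ∀ i, x i < s'} from hs),
      indicator_of_mem (show x ∈ {x : Fin k → ℝ | ∀ i, x i < s} from hs), enorm_mul]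
    refine mul_le_of_le_one_right' ?_
    rw [Real.enorm_of_nonneg (exp_pos _).le]
    exact ENNReal.ofReal_le_one.mpr hexp
  · simp [kernelMajorant, hs]

theorem lintegral_enorm_tghKernel_sq_le {k : ℕ} {α : ℝ} (hα : -1 < 2 * α + k)
    {g : (Fin k → ℝ) → ℝ} (hg : Measurable g)
    (hhom : ∀ c : ℝ, 0 < c → ∀ x : Fin k → ℝ, (∀ i, 0 < x i) → g (c • x) = c ^ α * g x)
    {lam : ℝ} (hlam : 0 ≤ lam) {t : ℝ} (ht : 0 ≤ t) :
    ∫⁻ x, ‖tghKernel g lam t x‖ₑ ^ 2 ≤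
      ENNReal.ofReal (2 * t ^ (2 * α + k + 2) / ((2 * α + k + 1) * (2 * α + k + 2))) *
        ∫⁻ y in {y : Fin k → ℝ | ∀ i, 0 < y i}, ‖g y * g (fun i => 1 + y i)‖ₑ :=
  calc ∫⁻ x, ‖tghKernel g lam t x‖ₑ ^ 2
      ≤ ∫⁻ x, (∫⁻ s in Ioc 0 t, kernelMajorant g s x) ^ 2 :=
        lintegral_mono fun x => pow_le_pow_left' (enorm_tghKernel_le g hlam t x) 2
    _ = ∫⁻ s in Ioc 0 t, ∫⁻ s' in Ioc 0 t, ∫⁻ x, kernelMajorant g s x * kernelMajorant g s' x :=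
        lintegral_sq_lintegral_eq (measurable_kernelMajorant hg)
    _ = _ := by
        rw [lintegral_lintegral_lintegral_mul_kernelMajorant hhom, Fintype.card_fin,
          lintegral_Ioc_lintegral_Ioc_abs_sub_rpow hα ht]

theorem integral_sq_le_toReal_lintegral_enorm_sq {α : Type*} [MeasurableSpace α] (μ : Measure α)
    (f : α → ℝ) : ∫ x, f x ^ 2 ∂μ ≤ (∫⁻ x, ‖f x‖ₑ ^ 2 ∂μ).toReal := by
  have h := (le_abs_self _).trans (norm_integral_le_lintegral_norm (μ := μ) fun x => f x ^ 2)
  simpa only [ofReal_norm, enorm_pow] using h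

theorem stmt2_general {k : ℕ} (α : ℝ)
    (hα₁ : -((k : ℝ) + 1) / 2 < α)
    (g : (Fin k → ℝ) → ℝ) (hg : Measurable g)
    (hhom : ∀ c : ℝ, 0 < c → ∀ x : Fin k → ℝ, (∀ i, 0 < x i) →
      g (c • x) = c ^ α * g x)
    (hint : IntegrableOn (fun y : Fin k → ℝ => |g y * g (fun i => 1 + y i)|)
      {y : Fin k → ℝ | ∀ i, 0 < y i})
    (lam : ℝ) (hlam : 0 < lam) (t : ℝ) (ht : 0 ≤ t) :
    (∫ x : Fin k → ℝ, (tghKernel g lam t x) ^ 2) ≤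
      (∫ y in {y : Fin k → ℝ | ∀ i, 0 < y i}, |g y * g (fun i => 1 + y i)|) *
        t ^ (2 * α + (k : ℝ) + 2) /
          ((α + ((k : ℝ) + 1) / 2) * (2 * α + (k : ℝ) + 2)) := by
  set A := ∫ y in {y : Fin k → ℝ | ∀ i, 0 < y i}, |g y * g (fun i => 1 + y i)|
  have hA : ∫⁻ y in {y : Fin k → ℝ | ∀ i, 0 < y i}, ‖g y * g (fun i => 1 + y i)‖ₑ =
      ENNReal.ofReal A := by
    simp_rw [Real.enorm_eq_ofReal_abs]
    exact (ofReal_integral_eq_lintegral_ofReal hint (ae_of_all _ fun _ => abs_nonneg _)).symm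
  have hA0 : 0 ≤ A := integral_nonneg fun _ => abs_nonneg _
  have hp : -1 < 2 * α + (k : ℝ) := by linarith
  have hc : 0 ≤ 2 * t ^ (2 * α + k + 2) / ((2 * α + k + 1) * (2 * α + k + 2)) :=
    div_nonneg (by positivity) (mul_pos (by linarith) (by linarith)).le
  calc ∫ x, tghKernel g lam t x ^ 2
      ≤ (∫⁻ x, ‖tghKernel g lam t x‖ₑ ^ 2).toReal := integral_sq_le_toReal_lintegral_enorm_sq _ _
    _ ≤ (ENNReal.ofReal
          (2 * t ^ (2 * α + k + 2) / ((2 * α + k + 1) * (2 * α + k + 2)) * A)).toReal := by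
        refine ENNReal.toReal_mono ENNReal.ofReal_ne_top ?_
        rw [ENNReal.ofReal_mul hc, ← hA]
        exact lintegral_enorm_tghKernel_sq_le hp hg hhom hlam.le ht
    _ = _ := by
        rw [ENNReal.toReal_ofReal (mul_nonneg hc hA0)]
        field_simp
        ring

theorem stmt2 {k : ℕ} (hk : 1 ≤ k) (α : ℝ)
    (hα₁ : -((k : ℝ) + 1) / 2 < α) (hα₂ : α < -(k : ℝ) / 2)
    (g : (Fin k → ℝ) → ℝ) (hg : Measurable g)
    (hhom : ∀ c : ℝ, 0 < c → ∀ x : Fin k → ℝ, (∀ i, 0 < x i) →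
      g (c • x) = c ^ α * g x)
    (hint : IntegrableOn (fun y : Fin k → ℝ => |g y * g (fun i => 1 + y i)|)
      {y : Fin k → ℝ | ∀ i, 0 < y i})
    (lam : ℝ) (hlam : 0 < lam) (t : ℝ) (ht : 0 ≤ t) :
    (∫ x : Fin k → ℝ, (tghKernel g lam t x) ^ 2) ≤
      (∫ y in {y : Fin k → ℝ | ∀ i, 0 < y i}, |g y * g (fun i => 1 + y i)|) *
        t ^ (2 * α + (k : ℝ) + 2) /
          ((α + ((k : ℝ) + 1) / 2) * (2 * α + (k : ℝ) + 2)) :=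
  stmt2_general α hα₁ g hg hhom hint lam hlam t ht
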